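/- A semiprime ring with infinitely many minimal prime ideals cannot be embedded (via an injective ring homomorphism) into a semiprimary ring. -/

import Mathlib

/-!
If `f : R → A` is injective and `J` is the nilpotent Jacobson radical of `A`, then `f⁻¹ J` is a
nilpotent left ideal of the semiprime ring `R`, hence zero, so `R` embeds in the Artinian ring
`A / J`. An infinite strictly ascending chain of right annihilators in `R` would then give a
strictly descending chain of left annihilators in `A / J`, so `R` has ACC on right annihilators.
In a semiprime ring with this chain condition a maximal proper annihilator ideal is prime, and
cutting down by such primes shows that `⊥` is a finite intersection of primes `P₁ ⊓ ⋯ ⊓ Pₙ`.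
Every minimal prime contains, hence equals, one of the `Pᵢ`.
-/

/-- A ring is semiprime if `a R a = 0` implies `a = 0`. -/
def IsSemiprimeRing' (R : Type*) [Ring R] : Prop :=
  ∀ a : R, (∀ r : R, a * r * a = 0) → a = 0

/-- A two-sided ideal `P` is prime if `P ≠ ⊤` and `a R b ⊆ P` implies `a ∈ P` or `b ∈ P`. -/
def TwoSidedIdeal.IsPrime' {R : Type*} [Ring R] (P : TwoSidedIdeal R) : Prop :=
  P ≠ ⊤ ∧ ∀ a b : R, (∀ r : R, a * r * b ∈ P) → a ∈ P ∨ b ∈ P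

/-- A minimal prime of a ring. -/
def TwoSidedIdeal.IsMinimalPrime' {R : Type*} [Ring R] (P : TwoSidedIdeal R) : Prop :=
  P.IsPrime' ∧ ∀ Q : TwoSidedIdeal R, Q.IsPrime' → Q ≤ P → Q = P

/-- A ring is semiprimary if its Jacobson radical `J` is nilpotent (all products of `n`
elements of `J` vanish, for some `n ≥ 1`) and the quotient `A/J` is semisimple Artinian. -/
def IsSemiprimaryRing' (A : Type*) [Ring A] : Prop :=
  IsSemisimpleRing ((TwoSidedIdeal.jacobson (⊥ : TwoSidedIdeal A)).ringCon.Quotient) ∧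
  ∃ n : ℕ, n ≠ 0 ∧ ∀ l : List A,
    (∀ x ∈ l, x ∈ TwoSidedIdeal.jacobson (⊥ : TwoSidedIdeal A)) → l.length = n → l.prod = 0

open Function TwoSidedIdeal

namespace TwoSidedIdeal

variable {R : Type*} [Ring R]

/-- The right annihilator of the right ideal `T R`; unlike that of `T` itself, it is a two-sided
ideal for every `T`. -/
def rightAnn (T : Set R) : TwoSidedIdeal R :=
  mk' {x | ∀ t ∈ T, ∀ r, t * r * x = 0}
    (fun _ _ _ => mul_zero _)
    (fun hx hy t ht r => by rw [mul_add, hx t ht r, hy t ht r, add_zero])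
    (fun hx t ht r => by rw [mul_neg, hx t ht r, neg_zero])
    (fun {x _} hy t ht r => by rw [← mul_assoc, mul_assoc t]; exact hy t ht (r * x))
    (fun hx t ht r => by rw [← mul_assoc, hx t ht r, zero_mul])

@[simp]
lemma mem_rightAnn {T : Set R} {x : R} : x ∈ rightAnn T ↔ ∀ t ∈ T, ∀ r, t * r * x = 0 :=
  mem_mk' ..

lemma rightAnn_antitone : Antitone (rightAnn (R := R)) :=
  fun _ _ h _ hx => mem_rightAnn.2 fun t ht => mem_rightAnn.1 hx t (h ht)

lemma rightAnn_ne_top_iff {T : Set R} : rightAnn T ≠ ⊤ ↔ ∃ t ∈ T, t ≠ 0 := by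
  rw [Ne, ← one_mem_iff, mem_rightAnn]
  constructor
  · intro h
    by_contra! h'
    exact h fun t ht r => by rw [h' t ht, zero_mul, zero_mul]
  · rintro ⟨t, ht, h0⟩ h
    exact h0 (by simpa using h t ht 1)

lemma isPrime'_rightAnn {T : Set R} (hT : rightAnn T ≠ ⊤)
    (hmax : ∀ T' : Set R, rightAnn T' ≠ ⊤ → ¬ rightAnn T < rightAnn T') :
    (rightAnn T).IsPrime' := by
  refine ⟨hT, fun a b hab => or_iff_not_imp_left.2 fun ha => ?_⟩
  let Ta : Set R := {y | ∃ t ∈ T, ∃ r, y = t * r * a}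
  have hle : rightAnn T ≤ rightAnn Ta := by
    intro x hx
    rw [mem_rightAnn] at hx ⊢
    rintro _ ⟨t, ht, r, rfl⟩ ρ
    simpa only [mul_assoc] using hx t ht (r * a * ρ)
  have hTa : rightAnn Ta ≠ ⊤ := by
    simp only [mem_rightAnn, not_forall] at ha
    obtain ⟨t, ht, r, htra⟩ := ha
    exact rightAnn_ne_top_iff.2 ⟨_, ⟨t, ht, r, rfl⟩, htra⟩
  rw [eq_of_le_of_not_lt hle (hmax Ta hTa), mem_rightAnn]
  rintro _ ⟨t, ht, r, rfl⟩ ρ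
  simpa only [mul_assoc] using mem_rightAnn.1 (hab ρ) t ht r

lemma IsPrime'.inf_le {P I J : TwoSidedIdeal R} (hP : P.IsPrime') :
    I ⊓ J ≤ P ↔ I ≤ P ∨ J ≤ P := by
  refine ⟨fun h => or_iff_not_imp_left.2 fun hI b hb => ?_,
    fun h => h.elim (le_trans inf_le_left) (le_trans inf_le_right)⟩
  obtain ⟨a, haI, haP⟩ := SetLike.not_le_iff_exists.1 hI
  refine (hP.2 a b fun r => h ((mem_inf _).2 ⟨I.mul_mem_right _ _ (I.mul_mem_right _ _ haI),
    J.mul_mem_left _ _ hb⟩)).resolve_left haP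

lemma IsPrime'.finset_inf_le {ι : Type*} {P : TwoSidedIdeal R} (hP : P.IsPrime') {s : Finset ι}
    {f : ι → TwoSidedIdeal R} : s.inf f ≤ P ↔ ∃ i ∈ s, f i ≤ P := by
  classical
  induction s using Finset.induction_on with
  | empty => simpa using hP.1
  | insert i s _ ih => simp [Finset.inf_insert, hP.inf_le, ih]

end TwoSidedIdeal

/-- The elementwise form of an infinite strictly ascending chain of right annihilators. -/
def HasStaircase (R : Type*) [Ring R] : Prop :=
  ∃ s x : ℕ → R, (∀ k, s k * x k ≠ 0) ∧ ∀ k j, k < j → s j * x k = 0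

section Staircase

variable {R S : Type*} [Ring R] [Ring S]

lemma HasStaircase.map {f : R →+* S} (hf : Injective f) (h : HasStaircase R) :
    HasStaircase S := by
  obtain ⟨s, x, hsx, hxs⟩ := h
  refine ⟨f ∘ s, f ∘ x, fun k => ?_, fun k j hkj => ?_⟩
  · simpa only [comp_apply, ← map_mul] using (map_ne_zero_iff f hf).2 (hsx k)
  · simp only [comp_apply, ← map_mul, hxs k j hkj, map_zero]

lemma hasStaircase_of_strictMono {T : ℕ → Set R} (hT : StrictMono fun n => rightAnn (T n)) :
    HasStaircase R := by
  have hgap n : ∃ x ∈ rightAnn (T (n + 1)), ∃ t ∈ T n, ∃ r, t * r * x ≠ 0 := by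
    obtain ⟨-, x, hx, hxn⟩ := SetLike.lt_iff_le_and_exists.1 (hT (Nat.lt_succ_self n))
    simp only [mem_rightAnn, not_forall, exists_prop] at hxn
    exact ⟨x, hx, hxn⟩
  choose x hx t ht r hne using hgap
  refine ⟨fun n => t n * r n, x, hne, fun k j hkj => ?_⟩
  exact mem_rightAnn.1 (hT.monotone hkj (hx k)) (t j) (ht j) (r j)

lemma wellFounded_rightAnn_gt (h : ¬ HasStaircase R) :
    WellFounded fun T T' : Set R => rightAnn T' < rightAnn T :=
  wellFounded_iff_isEmpty_descending_chain.2
    ⟨fun ⟨_, hT⟩ => h (hasStaircase_of_strictMono (strictMono_nat_of_lt_succ hT))⟩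

lemma not_hasStaircase [IsArtinianRing S] : ¬ HasStaircase S := by
  rintro ⟨s, x, hsx, hxs⟩
  let Z (k : ℕ) : Ideal S := ⨅ j < k, LinearMap.ker (LinearMap.toSpanSingleton S S (x j))
  have hZ k y : y ∈ Z k ↔ ∀ j < k, y * x j = 0 := by simp [Z]
  refine not_strictAnti_of_wellFoundedLT Z (strictAnti_nat_of_succ_lt fun m => ?_)
  refine SetLike.lt_iff_le_and_exists.2 ⟨fun y hy => (hZ m y).2 fun j hj => (hZ _ y).1 hy j
    (Nat.lt_succ_of_lt hj), s m, (hZ m _).2 fun j hj => hxs j m hj, fun h => hsx m ?_⟩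
  exact (hZ _ _).1 h m (Nat.lt_succ_self m)

end Staircase

namespace IsSemiprimeRing'

variable {R : Type*} [Ring R]

lemma mul_eq_zero_of_forall_mul_eq_zero (hR : IsSemiprimeRing' R) (I : TwoSidedIdeal R) {t : R}
    (ht : ∀ c ∈ I, t * c = 0) {c : R} (hc : c ∈ I) : c * t = 0 :=
  hR _ fun r => calc
    c * t * r * (c * t) = c * (t * (r * c)) * t := by simp only [mul_assoc]
    _ = 0 := by rw [ht _ (I.mul_mem_left r c hc), mul_zero, zero_mul]

lemma exists_isPrime'_rightAnn_lt (hR : IsSemiprimeRing' R) (hns : ¬ HasStaircase R)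
    {C : TwoSidedIdeal R} (hC : C ≠ ⊥) :
    ∃ P : TwoSidedIdeal R, P.IsPrime' ∧ rightAnn (C : Set R) < rightAnn ↑(C ⊓ P) := by
  have hCne : rightAnn (C : Set R) ≠ ⊤ := by
    refine rightAnn_ne_top_iff.2 ?_
    by_contra! h
    exact hC (eq_bot_iff.2 fun x hx => (mem_bot _).2 (h x hx))
  obtain ⟨T, ⟨hT, hCT⟩, hmax⟩ := (wellFounded_rightAnn_gt hns).has_min
    {T | rightAnn T ≠ ⊤ ∧ rightAnn (C : Set R) ≤ rightAnn T} ⟨C, hCne, le_rfl⟩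
  have hP := isPrime'_rightAnn hT fun T' hT' hlt => hmax T' ⟨hT', hCT.trans hlt.le⟩ hlt
  -- otherwise `T ⊆ rightAnn C ⊆ rightAnn T`, so `t R t = 0` for every `t ∈ T`
  obtain ⟨t, ht, s, hs, hst⟩ : ∃ t ∈ T, ∃ s ∈ C, s * t ≠ 0 := by
    by_contra! h
    obtain ⟨t, ht, ht0⟩ := rightAnn_ne_top_iff.1 hT
    have htC : t ∈ rightAnn (C : Set R) :=
      mem_rightAnn.2 fun s hs r => h t ht _ (C.mul_mem_right s r hs)
    exact ht0 (hR t fun r => mem_rightAnn.1 (hCT htC) t ht r)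
  refine ⟨rightAnn T, hP, SetLike.lt_iff_le_and_exists.2
    ⟨rightAnn_antitone (SetLike.coe_subset_coe.2 inf_le_left), t, ?_, ?_⟩⟩
  · refine mem_rightAnn.2 fun d hd r => hR.mul_eq_zero_of_forall_mul_eq_zero _
      (fun c hc => ?_) ((C ⊓ rightAnn T).mul_mem_right d r hd)
    simpa using mem_rightAnn.1 ((mem_inf _).1 hc).2 t ht 1
  · exact fun h => hst (by simpa using mem_rightAnn.1 h s hs 1)

lemma exists_finset_isPrime'_inf_eq_bot (hR : IsSemiprimeRing' R) (hns : ¬ HasStaircase R) :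
    ∃ s : Finset (TwoSidedIdeal R), (∀ P ∈ s, P.IsPrime') ∧ s.inf id = ⊥ := by
  classical
  obtain ⟨_, ⟨_, ⟨s, hs, rfl⟩, rfl⟩, hmax⟩ := (wellFounded_rightAnn_gt hns).has_min
    ((↑) '' {C : TwoSidedIdeal R | ∃ s : Finset _, (∀ P ∈ s, P.IsPrime') ∧ s.inf id = C})
    ⟨_, ⟨⊤, ⟨∅, by simp, rfl⟩, rfl⟩⟩
  refine ⟨s, hs, by_contra fun hbot => ?_⟩
  obtain ⟨P, hP, hlt⟩ := hR.exists_isPrime'_rightAnn_lt hns hbot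
  refine hmax _ ⟨_, ⟨insert P s, ?_, by rw [Finset.inf_insert, id, inf_comm]⟩, rfl⟩ hlt
  simpa [hP] using hs

lemma finite_setOf_isMinimalPrime' (hR : IsSemiprimeRing' R) (hns : ¬ HasStaircase R) :
    {P : TwoSidedIdeal R | P.IsMinimalPrime'}.Finite := by
  obtain ⟨s, hs, hbot⟩ := hR.exists_finset_isPrime'_inf_eq_bot hns
  refine s.finite_toSet.subset fun Q hQ => ?_
  obtain ⟨P, hPs, hPQ⟩ := hQ.1.finset_inf_le.1 (hbot ▸ bot_le)
  exact hQ.2 P (hs P hPs) hPQ ▸ hPs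

end IsSemiprimeRing'

lemma List.prod_eq_zero_of_le_length {M : Type*} [MonoidWithZero M] {S : Set M} {k : ℕ}
    (h : ∀ l : List M, (∀ x ∈ l, x ∈ S) → l.length = k → l.prod = 0) {l : List M}
    (hl : ∀ x ∈ l, x ∈ S) (hk : k ≤ l.length) : l.prod = 0 := by
  rw [← l.prod_take_mul_prod_drop k, h _ (fun x hx => hl x (List.mem_of_mem_take hx))
    (by simpa using hk), zero_mul]

lemma IsSemiprimeRing'.eq_bot_of_list_prod_eq_zero {R : Type*} [Ring R] (hR : IsSemiprimeRing' R)
    {L : Ideal R} {n : ℕ} (hn : n ≠ 0)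
    (h : ∀ l : List R, (∀ x ∈ l, x ∈ L) → l.length = n → l.prod = 0) : L = ⊥ := by
  let Q (k : ℕ) : Prop := ∀ l : List R, (∀ x ∈ l, x ∈ L) → l.length = k → l.prod = 0
  have hdesc : ∀ k < n, 1 ≤ k → Q (k + 1) → Q k := by
    rintro k - hk hsucc (_ | ⟨a, t⟩) hl hlen
    · simp only [List.length_nil] at hlen
      omega
    refine hR _ fun r => ?_
    -- `l r l` is itself a product of `2k ≥ k + 1` elements of `L`, as `r a ∈ L`
    calc (a :: t).prod * r * (a :: t).prod = ((a :: t) ++ (r * a) :: t).prod := by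
          simp only [List.prod_append, List.prod_cons, mul_assoc]
      _ = 0 := List.prod_eq_zero_of_le_length hsucc (by
          simp only [List.mem_append, List.mem_cons] at hl ⊢
          rintro x ((rfl | hx) | rfl | hx)
          exacts [hl x (Or.inl rfl), hl x (Or.inr hx), L.smul_mem r (hl a (Or.inl rfl)),
            hl x (Or.inr hx)])
          (by simp only [List.length_append, List.length_cons] at hlen ⊢; omega)
  have h1 : Q 1 := Nat.decreasingInduction' hdesc (Nat.one_le_iff_ne_zero.2 hn) h
  exact (Submodule.eq_bot_iff L).2 fun x hx => by simpa using h1 [x] (by simpa) rfl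

/-- A semiprime ring with infinitely many minimal primes cannot be embedded into
a semiprimary ring. -/
theorem stmt_5 {R : Type*} [Ring R] (hsp : IsSemiprimeRing' R)
    (hinf : {P : TwoSidedIdeal R | P.IsMinimalPrime'}.Infinite)
    (A : Type*) [Ring A] (hA : IsSemiprimaryRing' A) (f : R →+* A) :
    ¬ Function.Injective f := by
  intro hf
  obtain ⟨hss, n, hn, hJ⟩ := hA
  set J := TwoSidedIdeal.jacobson (⊥ : TwoSidedIdeal A)
  have hker : Ideal.comap f J.asIdeal = ⊥ := hsp.eq_bot_of_list_prod_eq_zero hn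
    fun l hl hlen => hf (by
      rw [map_list_prod, map_zero]
      exact hJ _ (by simpa using hl) (by simpa using hlen))
  have hg : Function.Injective ((RingCon.mk' J.ringCon).comp f) := by
    refine (injective_iff_map_eq_zero _).2 fun r hr => ?_
    have hrJ : f r ∈ J := (TwoSidedIdeal.mem_iff _ _).2 ((RingCon.eq _).1 hr)
    simpa [hker] using Ideal.mem_comap.2 (TwoSidedIdeal.mem_asIdeal.2 hrJ)
  exact hinf (hsp.finite_setOf_isMinimalPrime' fun h => not_hasStaircase (h.map hg))
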